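/- Let C, C' be τ-complexes over F₂, and let z ∈ C, z' ∈ C' be τ-invariant cycles. Define C_τ = Cone(1+τ), C'_τ = Cone(1+τ), and C⊗_τ = Cone(1⊗1 + τ⊗τ : C⊗C' → C⊗C'). Suppose there are elements x, y ∈ C and x', y' ∈ C' such that (z, 0) is homologous to (x, y) in C_τ and (z', 0) is homologous to (x', y') in C'_τ. Then in C⊗_τ, the cycle (z⊗z', 0) is homologous to (x⊗x', x⊗y' + y⊗τx'). -/

import Mathlib

/-!
Write `x = z - d a`, `y = -((1 + τ) a + d b)` and similarly on the primed side. The boundary of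
`q = (x ⊗ a' + a ⊗ x' + a ⊗ d'a', x ⊗ b' + b ⊗ τ'x' + (1 + τ) a ⊗ τ'a')` is computed on pure
tensors, using that `z, z'` are τ-invariant cycles and that the differentials commute with the
involutions: its first component is `z ⊗ z' - x ⊗ x'` over any ring, and its second differs from
`-(x ⊗ y' + y ⊗ τ'x')` by `2 (d a ⊗ τ'a' + (1 + τ) a ⊗ τ'd'a')`, which vanishes in characteristic 2.
-/

open TensorProduct

/- `coneD d τ` is the differential `[[d,0],[1+τ,d]]` of `Cone(1+τ)` on `C ⊕ C[1]`. -/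
def coneD {R C : Type*} [CommRing R] [AddCommGroup C] [Module R C]
    (d τ : C →ₗ[R] C) : C × C →ₗ[R] C × C :=
  LinearMap.prod (d ∘ₗ LinearMap.fst R C C)
    ((LinearMap.id + τ) ∘ₗ LinearMap.fst R C C + d ∘ₗ LinearMap.snd R C C)

section

variable {R : Type*} [CommRing R]

@[simp]
theorem coneD_apply {C : Type*} [AddCommGroup C] [Module R C] (d τ : C →ₗ[R] C) (p : C × C) :
    coneD d τ p = (d p.1, p.1 + τ p.1 + d p.2) :=
  rfl

theorem sub_eq_coneD_iff {C : Type*} [AddCommGroup C] [Module R C] {d τ : C →ₗ[R] C}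
    {z x y a b : C} :
    ((z, 0) : C × C) - (x, y) = coneD d τ (a, b) ↔ x = z - d a ∧ y = -(a + τ a + d b) := by
  simp only [coneD_apply, Prod.ext_iff, Prod.fst_sub, Prod.snd_sub]
  rw [sub_eq_iff_eq_add', eq_sub_iff_add_eq, eq_comm (a := z), zero_sub, neg_eq_iff_eq_neg]

variable {C C' : Type*} [AddCommGroup C] [Module R C] [AddCommGroup C'] [Module R C']

def tensorConePrimitive (τ : C →ₗ[R] C) (d' τ' : C' →ₗ[R] C') (x a b : C) (x' a' b' : C') :
    (C ⊗[R] C') × (C ⊗[R] C') :=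
  (x ⊗ₜ a' + a ⊗ₜ x' + a ⊗ₜ d' a', x ⊗ₜ b' + b ⊗ₜ τ' x' + (a + τ a) ⊗ₜ τ' a')

variable {d τ : C →ₗ[R] C} {d' τ' : C' →ₗ[R] C'}

theorem fst_coneD_tensorConePrimitive (hdd : d ∘ₗ d = 0) (hdd' : d' ∘ₗ d' = 0)
    {z x a b : C} {z' x' a' b' : C'} (hz : d z = 0) (hz' : d' z' = 0)
    (hx : x = z - d a) (hx' : x' = z' - d' a') :
    (coneD (map d LinearMap.id + map LinearMap.id d') (map τ τ')
      (tensorConePrimitive τ d' τ' x a b x' a' b')).1 = z ⊗ₜ z' - x ⊗ₜ x' := by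
  subst hx hx'
  have hdd := LinearMap.congr_fun hdd
  have hdd' := LinearMap.congr_fun hdd'
  simp only [LinearMap.comp_apply, LinearMap.zero_apply] at hdd hdd'
  simp only [coneD_apply, tensorConePrimitive, LinearMap.add_apply, map_tmul, LinearMap.id_apply,
    map_add, map_sub, hz, hz', hdd, hdd', add_tmul, tmul_sub, sub_tmul, tmul_zero, zero_tmul]
  module

theorem snd_coneD_tensorConePrimitive [CharP R 2] (hdd : d ∘ₗ d = 0) (hdd' : d' ∘ₗ d' = 0)
    (hdτ : d ∘ₗ τ = τ ∘ₗ d) (hdτ' : d' ∘ₗ τ' = τ' ∘ₗ d')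
    {z x y a b : C} {z' x' y' a' b' : C'}
    (hz : d z = 0) (hzτ : τ z = z) (hz' : d' z' = 0) (hz'τ : τ' z' = z')
    (hx : x = z - d a) (hy : y = -(a + τ a + d b))
    (hx' : x' = z' - d' a') (hy' : y' = -(a' + τ' a' + d' b')) :
    (coneD (map d LinearMap.id + map LinearMap.id d') (map τ τ')
      (tensorConePrimitive τ d' τ' x a b x' a' b')).2 = -(x ⊗ₜ y' + y ⊗ₜ τ' x') := by
  subst hx hy hx' hy'
  have hdd := LinearMap.congr_fun hdd
  have hdd' := LinearMap.congr_fun hdd'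
  have hdτ := LinearMap.congr_fun hdτ
  have hdτ' := LinearMap.congr_fun hdτ'
  simp only [LinearMap.comp_apply, LinearMap.zero_apply] at hdd hdd' hdτ hdτ'
  simp only [coneD_apply, tensorConePrimitive, LinearMap.add_apply, map_tmul, LinearMap.id_apply,
    map_add, map_sub, hz, hz', hzτ, hz'τ, hdd, hdd', hdτ, hdτ', tmul_add, add_tmul, tmul_sub,
    sub_tmul, tmul_neg, neg_tmul, tmul_zero, zero_tmul, map_zero]
  have h2 : (2 : R) • (d a ⊗ₜ[R] τ' a' + a ⊗ₜ[R] τ' (d' a') + τ a ⊗ₜ[R] τ' (d' a')) = 0 := by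
    rw [CharTwo.two_eq_zero, zero_smul]
  linear_combination (norm := module) h2

theorem sub_eq_coneD_tensorConePrimitive [CharP R 2] (hdd : d ∘ₗ d = 0) (hdd' : d' ∘ₗ d' = 0)
    (hdτ : d ∘ₗ τ = τ ∘ₗ d) (hdτ' : d' ∘ₗ τ' = τ' ∘ₗ d')
    {z x y a b : C} {z' x' y' a' b' : C'}
    (hz : d z = 0) (hzτ : τ z = z) (hz' : d' z' = 0) (hz'τ : τ' z' = z')
    (hxy : ((z, 0) : C × C) - (x, y) = coneD d τ (a, b))
    (hxy' : ((z', 0) : C' × C') - (x', y') = coneD d' τ' (a', b')) :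
    ((z ⊗ₜ[R] z', 0) : (C ⊗[R] C') × (C ⊗[R] C')) - (x ⊗ₜ x', x ⊗ₜ y' + y ⊗ₜ τ' x') =
      coneD (map d LinearMap.id + map LinearMap.id d') (map τ τ')
        (tensorConePrimitive τ d' τ' x a b x' a' b') := by
  obtain ⟨hx, hy⟩ := sub_eq_coneD_iff.mp hxy
  obtain ⟨hx', hy'⟩ := sub_eq_coneD_iff.mp hxy'
  refine Prod.ext ?_ ?_
  · exact (fst_coneD_tensorConePrimitive hdd hdd' hz hz' hx hx').symm
  · rw [snd_coneD_tensorConePrimitive hdd hdd' hdτ hdτ' hz hzτ hz' hz'τ hx hy hx' hy']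
    exact zero_sub _

end

theorem tensor_cone_homologous_one_general
    {C C' : Type*} [AddCommGroup C] [Module (ZMod 2) C]
    [AddCommGroup C'] [Module (ZMod 2) C']
    (d τ : C →ₗ[ZMod 2] C) (d' τ' : C' →ₗ[ZMod 2] C')
    (hdd : d ∘ₗ d = 0) (hdd' : d' ∘ₗ d' = 0)
    (hdτ : d ∘ₗ τ = τ ∘ₗ d) (hdτ' : d' ∘ₗ τ' = τ' ∘ₗ d')
    (z : C) (hz : d z = 0) (hzτ : τ z = z)
    (z' : C') (hz' : d' z' = 0) (hz'τ : τ' z' = z')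
    (x y : C) (x' y' : C')
    (hxy : ∃ p : C × C, ((z, 0) : C × C) - (x, y) = coneD d τ p)
    (hxy' : ∃ p' : C' × C', ((z', 0) : C' × C') - (x', y') = coneD d' τ' p') :
    ∃ q : (C ⊗[ZMod 2] C') × (C ⊗[ZMod 2] C'),
      ((z ⊗ₜ[ZMod 2] z', (0 : C ⊗[ZMod 2] C'))
          : (C ⊗[ZMod 2] C') × (C ⊗[ZMod 2] C'))
        - (x ⊗ₜ[ZMod 2] x', x ⊗ₜ[ZMod 2] y' + y ⊗ₜ[ZMod 2] (τ' x'))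
        = coneD
            (TensorProduct.map d LinearMap.id + TensorProduct.map LinearMap.id d')
            (TensorProduct.map τ τ') q := by
  obtain ⟨⟨a, b⟩, hab⟩ := hxy
  obtain ⟨⟨a', b'⟩, hab'⟩ := hxy'
  exact ⟨_, sub_eq_coneD_tensorConePrimitive hdd hdd' hdτ hdτ' hz hzτ hz' hz'τ hab hab'⟩

/-- if `z, z'` are τ-invariant cycles and `(z,0) ∼ (x,y)` in
`C_τ`, `(z',0) ∼ (x',y')` in `C'_τ`, then in
`C⊗_τ = Cone(1⊗1 + τ⊗τ)` one has `(z⊗z', 0) ∼ (x⊗x', x⊗y' + y⊗τx')`. -/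
theorem tensor_cone_homologous_one
    {C C' : Type*} [AddCommGroup C] [Module (ZMod 2) C]
    [AddCommGroup C'] [Module (ZMod 2) C']
    (d τ : C →ₗ[ZMod 2] C) (d' τ' : C' →ₗ[ZMod 2] C')
    (hdd : d ∘ₗ d = 0) (hdd' : d' ∘ₗ d' = 0)
    (hτ : τ ∘ₗ τ = LinearMap.id) (hτ' : τ' ∘ₗ τ' = LinearMap.id)
    (hdτ : d ∘ₗ τ = τ ∘ₗ d) (hdτ' : d' ∘ₗ τ' = τ' ∘ₗ d')
    (z : C) (hz : d z = 0) (hzτ : τ z = z)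
    (z' : C') (hz' : d' z' = 0) (hz'τ : τ' z' = z')
    (x y : C) (x' y' : C')
    (hxy : ∃ p : C × C, ((z, 0) : C × C) - (x, y) = coneD d τ p)
    (hxy' : ∃ p' : C' × C', ((z', 0) : C' × C') - (x', y') = coneD d' τ' p') :
    ∃ q : (C ⊗[ZMod 2] C') × (C ⊗[ZMod 2] C'),
      ((z ⊗ₜ[ZMod 2] z', (0 : C ⊗[ZMod 2] C'))
          : (C ⊗[ZMod 2] C') × (C ⊗[ZMod 2] C'))
        - (x ⊗ₜ[ZMod 2] x', x ⊗ₜ[ZMod 2] y' + y ⊗ₜ[ZMod 2] (τ' x'))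
        = coneD
            (TensorProduct.map d LinearMap.id + TensorProduct.map LinearMap.id d')
            (TensorProduct.map τ τ') q :=
  tensor_cone_homologous_one_general d τ d' τ' hdd hdd' hdτ hdτ' z hz hzτ z' hz' hz'τ x y x' y' hxy
    hxy'
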